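/- arXiv:2201.01436 — 7 statements merged into one kernel-verified Lean document; each statement's English description precedes it below -/
import Mathlib

section
/- If x'_S ∈ S is a β-approximate 1-median of S and d(x'_S,x*) ≤ 2β·r̄_S, then ∑_{y∈M} d(x'_S,y) ≤ (1 + 4β·n/|S|)·∑_{y∈M} d(x*,y), i.e. x'_S is an O(βn/|S|)-approximate 1-median of M. -/
theorem stmt3 {M : Type*} [MetricSpace M] [Fintype M]
    (S : Finset M) (hS : S.Nonempty)
    (xstar : M) (hstar : ∀ q : M, ∑ y : M, dist xstar y ≤ ∑ y : M, dist q y)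
    (xS : M) (hxS : xS ∈ S)
    (hSopt : ∀ q ∈ S, ∑ y ∈ S, dist xS y ≤ ∑ y ∈ S, dist q y)
    (rbar : ℝ)
    (hr : rbar = (∑ u ∈ S, ∑ v ∈ S, dist u v) / (S.card : ℝ) ^ 2)
    (β : ℝ) (hβ : 1 ≤ β)
    (x'S : M) (hx' : x'S ∈ S)
    (happrox : ∑ y ∈ S, dist x'S y ≤ β * ∑ y ∈ S, dist xS y)
    (hclose : dist x'S xstar ≤ 2 * β * rbar) :
    ∑ y : M, dist x'S y ≤
      (1 + 4 * β * (Fintype.card M : ℝ) / S.card) * ∑ y : M, dist xstar y := by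
  set OPT := ∑ y : M, dist xstar y with hOPTdef
  set C := (S.card : ℝ) with hC
  set n := (Fintype.card M : ℝ) with hn
  have hCpos : (0:ℝ) < C := by rw [hC]; exact_mod_cast Finset.card_pos.mpr hS
  have hOPT : (0:ℝ) ≤ OPT := Finset.sum_nonneg fun y _ => dist_nonneg
  have hn0 : (0:ℝ) ≤ n := Nat.cast_nonneg _
  have hSsub : ∑ u ∈ S, dist xstar u ≤ OPT :=
    Finset.sum_le_sum_of_subset_of_nonneg (Finset.subset_univ S)
      (fun _ _ _ => dist_nonneg)
  -- bound on rbar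
  have hsum : ∑ u ∈ S, ∑ v ∈ S, dist u v ≤ 2 * C * ∑ u ∈ S, dist xstar u := by
    have h1 : ∑ u ∈ S, ∑ v ∈ S, dist u v
        ≤ ∑ u ∈ S, ∑ v ∈ S, (dist u xstar + dist xstar v) := by
      refine Finset.sum_le_sum fun u _ => Finset.sum_le_sum fun v _ => ?_
      exact dist_triangle u xstar v
    calc ∑ u ∈ S, ∑ v ∈ S, dist u v
        ≤ ∑ u ∈ S, ∑ v ∈ S, (dist u xstar + dist xstar v) := h1
      _ = ∑ u ∈ S, (C * dist u xstar + ∑ v ∈ S, dist xstar v) := by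
          refine Finset.sum_congr rfl fun u _ => ?_
          rw [Finset.sum_add_distrib, Finset.sum_const, nsmul_eq_mul]
      _ = C * ∑ u ∈ S, dist u xstar + C * ∑ v ∈ S, dist xstar v := by
          rw [Finset.sum_add_distrib, Finset.mul_sum, Finset.sum_const, nsmul_eq_mul]
      _ = 2 * C * ∑ u ∈ S, dist xstar u := by
          simp_rw [dist_comm _ xstar]; ring
  have hrbar : rbar ≤ 2 * OPT / C := by
    rw [hr, div_le_div_iff₀ (by positivity) hCpos]
    have : 2 * C * ∑ u ∈ S, dist xstar u ≤ 2 * C * OPT :=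
      mul_le_mul_of_nonneg_left hSsub (by positivity)
    calc (∑ u ∈ S, ∑ v ∈ S, dist u v) * C ≤ (2 * C * OPT) * C := by nlinarith
      _ = 2 * OPT * C ^ 2 := by ring
  have hβ0 : (0:ℝ) ≤ β := le_trans zero_le_one hβ
  have hd : dist x'S xstar ≤ 4 * β * OPT / C := by
    calc dist x'S xstar ≤ 2 * β * rbar := hclose
      _ ≤ 2 * β * (2 * OPT / C) := by
          exact mul_le_mul_of_nonneg_left hrbar (by positivity)
      _ = 4 * β * OPT / C := by ring
  have key : ∑ y : M, dist x'S y ≤ OPT + n * dist x'S xstar := by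
    calc ∑ y : M, dist x'S y
        ≤ ∑ y : M, (dist x'S xstar + dist xstar y) :=
          Finset.sum_le_sum fun y _ => dist_triangle x'S xstar y
      _ = n * dist x'S xstar + OPT := by
          rw [Finset.sum_add_distrib, Finset.sum_const, nsmul_eq_mul,
            Finset.card_univ]
      _ = OPT + n * dist x'S xstar := by ring
  have hnd : n * dist x'S xstar ≤ n * (4 * β * OPT / C) :=
    mul_le_mul_of_nonneg_left hd hn0
  have heq : (1 + 4 * β * n / C) * OPT = OPT + n * (4 * β * OPT / C) := by
    field_simp
  linarith
end

section
/- If x'_S ∈ S is a β-approximate 1-median of S and d(x'_S,x*) > 2β·r̄_S, then ∑_{y∈S} d(x*,y) > (|S|/2)·d(x'_S,x*). -/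
theorem stmt4 {M : Type*} [MetricSpace M] [Fintype M]
    (S : Finset M) (hS : S.Nonempty)
    (xstar : M)
    (xS : M) (hxS : xS ∈ S)
    (hSopt : ∀ q ∈ S, ∑ y ∈ S, dist xS y ≤ ∑ y ∈ S, dist q y)
    (rbar : ℝ)
    (hr : rbar = (∑ u ∈ S, ∑ v ∈ S, dist u v) / (S.card : ℝ) ^ 2)
    (β : ℝ) (hβ : 1 ≤ β)
    (x'S : M) (hx' : x'S ∈ S)
    (happrox : ∑ y ∈ S, dist x'S y ≤ β * ∑ y ∈ S, dist xS y)
    (hfar : 2 * β * rbar < dist x'S xstar) :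
    ((S.card : ℝ) / 2) * dist x'S xstar < ∑ y ∈ S, dist xstar y := by
  set n : ℝ := (S.card : ℝ) with hn
  have hn0 : 0 < n := by rw [hn]; exact_mod_cast Finset.card_pos.mpr hS
  have hsum : n * ∑ y ∈ S, dist xS y ≤ ∑ u ∈ S, ∑ v ∈ S, dist u v := by
    calc n * ∑ y ∈ S, dist xS y = ∑ _q ∈ S, ∑ y ∈ S, dist xS y := by
          rw [Finset.sum_const, nsmul_eq_mul]
      _ ≤ ∑ u ∈ S, ∑ v ∈ S, dist u v := Finset.sum_le_sum hSopt
  have hrbar : ∑ u ∈ S, ∑ v ∈ S, dist u v = n ^ 2 * rbar := by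
    rw [hr]; field_simp
  have h2 : ∑ y ∈ S, dist x'S y ≤ n * (β * rbar) := by
    calc ∑ y ∈ S, dist x'S y ≤ β * ∑ y ∈ S, dist xS y := happrox
      _ ≤ β * ((n ^ 2 * rbar) / n) := by
          apply mul_le_mul_of_nonneg_left _ (by linarith)
          rw [le_div_iff₀ hn0, ← hrbar]
          nlinarith [hsum]
      _ = n * (β * rbar) := by field_simp
  have h3 : ∀ y ∈ S, dist x'S xstar - dist x'S y ≤ dist xstar y := by
    intro y _
    have h := dist_triangle x'S y xstar
    rw [dist_comm y xstar] at h
    linarith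
  have h4 : n * dist x'S xstar - ∑ y ∈ S, dist x'S y ≤ ∑ y ∈ S, dist xstar y := by
    have hs := Finset.sum_le_sum h3
    have h5 : ∑ y ∈ S, (dist x'S xstar - dist x'S y)
        = n * dist x'S xstar - ∑ y ∈ S, dist x'S y := by
      rw [Finset.sum_sub_distrib, Finset.sum_const, nsmul_eq_mul]
    linarith
  have hβr : n * (β * rbar) < n * (dist x'S xstar / 2) := by
    apply mul_lt_mul_of_pos_left _ hn0; linarith
  nlinarith
end

section
/- If x'_S ∈ S is a β-approximate 1-median of S and d(x'_S,x*) > 2β·r̄_S, then ∑_{y∈M} d(x'_S,y) ≤ (1 + 2n/|S|)·∑_{y∈M} d(x*,y), i.e. x'_S is an O(n/|S|)-approximate 1-median of M. -/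
theorem stmt5 {M : Type*} [MetricSpace M] [Fintype M]
    (S : Finset M) (hS : S.Nonempty)
    (xstar : M) (hstar : ∀ q : M, ∑ y : M, dist xstar y ≤ ∑ y : M, dist q y)
    (xS : M) (hxS : xS ∈ S)
    (hSopt : ∀ q ∈ S, ∑ y ∈ S, dist xS y ≤ ∑ y ∈ S, dist q y)
    (rbar : ℝ)
    (hr : rbar = (∑ u ∈ S, ∑ v ∈ S, dist u v) / (S.card : ℝ) ^ 2)
    (β : ℝ) (hβ : 1 ≤ β)
    (x'S : M) (hx' : x'S ∈ S)
    (happrox : ∑ y ∈ S, dist x'S y ≤ β * ∑ y ∈ S, dist xS y)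
    (hfar : 2 * β * rbar < dist x'S xstar) :
    ∑ y : M, dist x'S y ≤
      (1 + 2 * (Fintype.card M : ℝ) / S.card) * ∑ y : M, dist xstar y := by
  have hs : (0:ℝ) < (S.card : ℝ) := by exact_mod_cast Finset.card_pos.mpr hS
  set s : ℝ := (S.card : ℝ) with hsdef
  -- key1 : ∑ y ∈ S, dist xS y ≤ s * rbar
  have hsum : s * ∑ y ∈ S, dist xS y ≤ ∑ u ∈ S, ∑ v ∈ S, dist u v := by
    have h1 : ∑ u ∈ S, (∑ y ∈ S, dist xS y) = s * ∑ y ∈ S, dist xS y := by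
      rw [Finset.sum_const, nsmul_eq_mul]
    rw [← h1]
    exact Finset.sum_le_sum (fun u hu => hSopt u hu)
  have key1 : ∑ y ∈ S, dist xS y ≤ s * rbar := by
    rw [hr, ← mul_div_assoc, le_div_iff₀ (by positivity)]
    nlinarith [hsum, hs]
  have hrnn : 0 ≤ rbar := by
    rw [hr]
    apply div_nonneg _ (by positivity)
    apply Finset.sum_nonneg; intro u _
    exact Finset.sum_nonneg fun v _ => dist_nonneg
  -- key2 : ∑ y ∈ S, dist x'S y ≤ s * dist x'S xstar / 2
  have key2 : ∑ y ∈ S, dist x'S y ≤ s * dist x'S xstar / 2 := by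
    have h2 : ∑ y ∈ S, dist x'S y ≤ β * (s * rbar) := by
      calc ∑ y ∈ S, dist x'S y ≤ β * ∑ y ∈ S, dist xS y := happrox
        _ ≤ β * (s * rbar) := by nlinarith
    nlinarith
  -- key3 : triangle inequality summed over S
  have key3 : s * dist x'S xstar ≤ ∑ y ∈ S, dist x'S y + ∑ y ∈ S, dist xstar y := by
    have h3 : ∀ y ∈ S, dist x'S xstar ≤ dist x'S y + dist xstar y := by
      intro y _
      rw [dist_comm xstar y]
      exact dist_triangle _ _ _
    calc s * dist x'S xstar = ∑ _y ∈ S, dist x'S xstar := by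
          rw [Finset.sum_const, nsmul_eq_mul]
      _ ≤ ∑ y ∈ S, (dist x'S y + dist xstar y) := Finset.sum_le_sum h3
      _ = _ := Finset.sum_add_distrib
  have hsub : ∑ y ∈ S, dist xstar y ≤ ∑ y : M, dist xstar y :=
    Finset.sum_le_sum_of_subset_of_nonneg (Finset.subset_univ S)
      (fun y _ _ => dist_nonneg)
  have hOPTnn : 0 ≤ ∑ y : M, dist xstar y :=
    Finset.sum_nonneg fun y _ => dist_nonneg
  have hdbound : dist x'S xstar ≤ 2 / s * ∑ y : M, dist xstar y := by
    rw [div_mul_eq_mul_div, le_div_iff₀ hs]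
    nlinarith
  have hnnn : (0:ℝ) ≤ (Fintype.card M : ℝ) := by positivity
  calc ∑ y : M, dist x'S y ≤ ∑ y : M, (dist x'S xstar + dist xstar y) :=
        Finset.sum_le_sum (fun y _ => dist_triangle _ _ _)
    _ = (Fintype.card M : ℝ) * dist x'S xstar + ∑ y : M, dist xstar y := by
        rw [Finset.sum_add_distrib, Finset.sum_const, Finset.card_univ, nsmul_eq_mul]
    _ ≤ (Fintype.card M : ℝ) * (2 / s * ∑ y : M, dist xstar y) + ∑ y : M, dist xstar y := by
        have := mul_le_mul_of_nonneg_left hdbound hnnn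
        linarith
    _ = (1 + 2 * (Fintype.card M : ℝ) / s) * ∑ y : M, dist xstar y := by
        field_simp
        ring
end

section
/- Every β-approximate 1-median of the subspace S is a (1 + 4β·n/|S|)-approximate 1-median of the whole space M. -/
theorem stmt6 {M : Type*} [MetricSpace M] [Fintype M]
    (S : Finset M) (hS : S.Nonempty)
    (β : ℝ) (hβ : 1 ≤ β)
    (x'S : M) (hx' : x'S ∈ S)
    (happrox : ∀ q ∈ S, ∑ y ∈ S, dist x'S y ≤ β * ∑ y ∈ S, dist q y) :
    ∀ q : M, ∑ y : M, dist x'S y ≤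
      (1 + 4 * β * (Fintype.card M : ℝ) / S.card) * ∑ y : M, dist q y := by
  intro q
  obtain ⟨s, hsS, hs⟩ := S.exists_min_image (fun y => dist q y) hS
  set OPT := ∑ y : M, dist q y with hOPTdef
  have hOPT0 : 0 ≤ OPT := Finset.sum_nonneg fun y _ => dist_nonneg
  have hsum0 : 0 ≤ ∑ y ∈ S, dist q y := Finset.sum_nonneg fun y _ => dist_nonneg
  have hSsub : ∑ y ∈ S, dist q y ≤ OPT :=
    Finset.sum_le_sum_of_subset_of_nonneg (S.subset_univ) (fun i _ _ => dist_nonneg)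
  have hcard : (0:ℝ) < S.card := by
    exact_mod_cast Finset.card_pos.mpr hS
  have hsq : (S.card : ℝ) * dist s q ≤ ∑ y ∈ S, dist q y := by
    calc (S.card : ℝ) * dist s q = ∑ _y ∈ S, dist s q := by
          rw [Finset.sum_const, nsmul_eq_mul]
      _ ≤ ∑ y ∈ S, dist q y := Finset.sum_le_sum fun y hy => by
          rw [dist_comm s q]; exact hs y hy
  have h1 : ∑ y ∈ S, dist s y ≤ 2 * ∑ y ∈ S, dist q y := by
    calc ∑ y ∈ S, dist s y ≤ ∑ y ∈ S, (dist s q + dist q y) :=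
          Finset.sum_le_sum fun y _ => dist_triangle s q y
      _ = (S.card : ℝ) * dist s q + ∑ y ∈ S, dist q y := by
          rw [Finset.sum_add_distrib, Finset.sum_const, nsmul_eq_mul]
      _ ≤ 2 * ∑ y ∈ S, dist q y := by linarith
  have h2 : ∑ y ∈ S, dist x'S y ≤ 2 * β * ∑ y ∈ S, dist q y := by
    calc ∑ y ∈ S, dist x'S y ≤ β * ∑ y ∈ S, dist s y := happrox s hsS
      _ ≤ β * (2 * ∑ y ∈ S, dist q y) := by
          apply mul_le_mul_of_nonneg_left h1; linarith
      _ = 2 * β * ∑ y ∈ S, dist q y := by ring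
  have h3 : (S.card : ℝ) * dist x'S q ≤ (2 * β + 1) * ∑ y ∈ S, dist q y := by
    calc (S.card : ℝ) * dist x'S q = ∑ _y ∈ S, dist x'S q := by
          rw [Finset.sum_const, nsmul_eq_mul]
      _ ≤ ∑ y ∈ S, (dist x'S y + dist q y) := Finset.sum_le_sum fun y hy => by
          have := dist_triangle x'S y q
          rw [dist_comm y q] at this; exact this
      _ = ∑ y ∈ S, dist x'S y + ∑ y ∈ S, dist q y := Finset.sum_add_distrib
      _ ≤ (2 * β + 1) * ∑ y ∈ S, dist q y := by linarith
  have hd : dist x'S q ≤ 4 * β * OPT / S.card := by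
    rw [le_div_iff₀ hcard]
    nlinarith [mul_le_mul_of_nonneg_left hSsub (by linarith : (0:ℝ) ≤ 2 * β + 1),
      mul_nonneg (by linarith : (0:ℝ) ≤ 2 * β - 1) hOPT0]
  calc ∑ y : M, dist x'S y ≤ ∑ y : M, (dist x'S q + dist q y) :=
        Finset.sum_le_sum fun y _ => dist_triangle x'S q y
    _ = (Fintype.card M : ℝ) * dist x'S q + OPT := by
        rw [Finset.sum_add_distrib, Finset.sum_const, nsmul_eq_mul, Finset.card_univ]
    _ ≤ (Fintype.card M : ℝ) * (4 * β * OPT / S.card) + OPT := by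
        have : (0:ℝ) ≤ (Fintype.card M : ℝ) := Nat.cast_nonneg _
        nlinarith
    _ = (1 + 4 * β * (Fintype.card M : ℝ) / S.card) * OPT := by
        field_simp; ring
end

section
/- In an (α,d)-expander graph, for every nonempty set U of at most n/2 vertices, the sum over x∈U of the graph distance from x to the complement M∖U is at most |U|/α². -/
open Finset

theorem stmt10 {V : Type*} [Fintype V] [DecidableEq V] (G : SimpleGraph V) [DecidableRel G.Adj]
    (n : ℕ) (hn : Fintype.card V = n)
    (d : ℕ) (hreg : ∀ v : V, G.degree v = d)
    (α : ℝ) (hα0 : 0 < α) (hα1 : α < 1)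
    (hexp : ∀ S : Finset V, (S.card : ℝ) ≤ n / 2 →
      α * d * S.card ≤
        ({p : V × V | p.1 ∈ S ∧ p.2 ∉ S ∧ G.Adj p.1 p.2}.ncard : ℝ))
    (U : Finset V) (hU : U.Nonempty) (hUhalf : (U.card : ℝ) ≤ n / 2)
    (hUc : Uᶜ.Nonempty) :
    ∑ x ∈ U, ((Uᶜ.inf' hUc (fun t => G.dist x t) : ℕ) : ℝ) ≤
      (U.card : ℝ) / α ^ 2 := by
  classical
  set D : V → ℕ := fun x => Uᶜ.inf' hUc (fun t => G.dist x t) with hDdef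
  have hUcard_nonneg : (0:ℝ) ≤ (U.card : ℝ) := Nat.cast_nonneg _
  have hα2 : (0:ℝ) < α ^ 2 := pow_pos hα0 2
  -- dispose of the degenerate case d = 0
  by_cases hd0 : d = 0
  · have hnoadj : ∀ u w : V, ¬ G.Adj u w := by
      intro u w h
      have h1 : G.neighborFinset u = ∅ := by
        apply Finset.card_eq_zero.mp
        rw [G.card_neighborFinset_eq_degree, hreg u, hd0]
      have h2 : w ∈ G.neighborFinset u := by
        rw [SimpleGraph.mem_neighborFinset]; exact h
      rw [h1] at h2; exact absurd h2 (Finset.notMem_empty w)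
    have hzero : ∀ x ∈ U, D x = 0 := by
      intro x hx
      obtain ⟨t, ht⟩ := hUc
      have hxt : x ≠ t := by
        intro h; subst h; exact (Finset.mem_compl.mp ht) hx
      have hnr : ¬ G.Reachable x t := by
        rintro ⟨p⟩
        cases p with
        | nil => exact hxt rfl
        | cons h q => exact hnoadj _ _ h
      have h1 : D x ≤ G.dist x t := Finset.inf'_le _ ht
      have h2 : G.dist x t = 0 := SimpleGraph.dist_eq_zero_of_not_reachable hnr
      omega
    have : ∑ x ∈ U, ((D x : ℕ) : ℝ) = 0 := by
      apply Finset.sum_eq_zero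
      intro x hx; rw [hzero x hx]; norm_num
    rw [this]
    positivity
  -- main case : d ≥ 1
  have hd : (0:ℝ) < d := by positivity
  set A : ℕ → Finset V := fun j => U.filter (fun x => j ≤ D x) with hAdef
  have hAsub : ∀ j, A j ⊆ U := fun j => Finset.filter_subset _ _
  have hAmono : ∀ j, A (j+1) ⊆ A j := by
    intro j x hx
    simp only [hAdef, Finset.mem_filter] at hx ⊢
    exact ⟨hx.1, le_trans (Nat.le_succ j) hx.2⟩
  have hn1 : 1 ≤ n := by
    rw [← hn]
    have := Finset.card_le_univ U
    have := Finset.card_pos.mpr hU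
    omega
  -- distances are bounded by n
  have hDlt : ∀ x, D x < n := by
    intro x
    obtain ⟨t, ht⟩ := hUc
    have h1 : D x ≤ G.dist x t := Finset.inf'_le _ ht
    have h2 : G.dist x t < n := by
      by_cases h : G.dist x t = 0
      · omega
      · obtain ⟨p, hp⟩ := SimpleGraph.exists_walk_of_dist_ne_zero h
        have h3 := SimpleGraph.dist_le p.bypass
        have h4 := p.bypass_isPath.length_lt
        rw [hn] at h4
        omega
    omega
  -- the key expansion step
  have key : ∀ j : ℕ, 1 ≤ j →
      α * (((A j).card : ℝ)) ≤ ((A j).card : ℝ) - ((A (j+1)).card : ℝ) := by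
    intro j hj
    -- all neighbors of A (j+1) lie in A j
    have hnb : ∀ x ∈ A (j+1), ∀ y, G.Adj x y → y ∈ A j := by
      intro x hx y hxy
      simp only [hAdef, Finset.mem_filter] at hx
      obtain ⟨hxU, hxD⟩ := hx
      have hyU : y ∈ U := by
        by_contra hyU
        have hyUc : y ∈ Uᶜ := Finset.mem_compl.mpr hyU
        have h1 : D x ≤ G.dist x y := Finset.inf'_le _ hyUc
        have h2 : G.dist x y = 1 := SimpleGraph.dist_eq_one_iff_adj.mpr hxy
        omega
      simp only [hAdef, Finset.mem_filter]
      refine ⟨hyU, ?_⟩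
      apply Finset.le_inf'
      intro t ht
      have hxt : j + 1 ≤ G.dist x t := le_trans hxD (Finset.inf'_le _ ht)
      have hne : G.dist x t ≠ 0 := by omega
      have hreach : G.Reachable x t := SimpleGraph.Reachable.of_dist_ne_zero hne
      have hry : G.Reachable y t := (SimpleGraph.Adj.reachable hxy.symm).trans hreach
      obtain ⟨p, hp⟩ := hry.exists_walk_length_eq_dist
      have h5 : G.dist x t ≤ (SimpleGraph.Walk.cons hxy p).length := SimpleGraph.dist_le _
      rw [SimpleGraph.Walk.length_cons, hp] at h5
      omega
    have hScard : ((A j).card : ℝ) ≤ n / 2 := by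
      refine le_trans ?_ hUhalf
      exact_mod_cast Finset.card_le_card (hAsub j)
    have hE := hexp (A j) hScard
    set F : Finset (V × V) :=
      Finset.univ.filter (fun p => p.1 ∈ A j ∧ p.2 ∉ A j ∧ G.Adj p.1 p.2) with hF
    have hFe : {p : V × V | p.1 ∈ A j ∧ p.2 ∉ A j ∧ G.Adj p.1 p.2} = ↑F := by
      ext p; simp [hF]
    rw [hFe, Set.ncard_coe_finset] at hE
    have hFsub : F ⊆ (A j \ A (j+1)).biUnion (fun x => {x} ×ˢ G.neighborFinset x) := by
      intro p hp
      simp only [hF, Finset.mem_filter, Finset.mem_univ, true_and] at hp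
      obtain ⟨h1, h2, h3⟩ := hp
      have h4 : p.1 ∉ A (j+1) := fun hc => h2 (hnb p.1 hc p.2 h3)
      simp only [Finset.mem_biUnion, Finset.mem_sdiff, Finset.mem_product,
        Finset.mem_singleton, SimpleGraph.mem_neighborFinset]
      exact ⟨p.1, ⟨h1, h4⟩, rfl, h3⟩
    have hFcard : F.card ≤ d * (A j \ A (j+1)).card := by
      calc F.card ≤ ((A j \ A (j+1)).biUnion (fun x => {x} ×ˢ G.neighborFinset x)).card :=
            Finset.card_le_card hFsub
        _ ≤ ∑ x ∈ A j \ A (j+1), ({x} ×ˢ G.neighborFinset x).card :=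
            Finset.card_biUnion_le
        _ = ∑ x ∈ A j \ A (j+1), d := by
            apply Finset.sum_congr rfl
            intro x _
            rw [Finset.card_product, Finset.card_singleton, one_mul,
              G.card_neighborFinset_eq_degree, hreg x]
        _ = (A j \ A (j+1)).card * d := by rw [Finset.sum_const, smul_eq_mul]
        _ = d * (A j \ A (j+1)).card := mul_comm _ _
    have hle := Finset.card_le_card (hAmono j)
    have hsd : ((A j \ A (j+1)).card : ℝ) = ((A j).card : ℝ) - ((A (j+1)).card : ℝ) := by
      rw [Finset.card_sdiff_of_subset (hAmono j)]
      exact Nat.cast_sub hle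
    have hchain : α * d * ((A j).card : ℝ) ≤ d * (((A j).card : ℝ) - ((A (j+1)).card : ℝ)) := by
      calc α * d * ((A j).card : ℝ) ≤ (F.card : ℝ) := hE
        _ ≤ (d : ℝ) * ((A j \ A (j+1)).card : ℝ) := by exact_mod_cast hFcard
        _ = d * (((A j).card : ℝ) - ((A (j+1)).card : ℝ)) := by rw [hsd]
    have := mul_le_mul_of_nonneg_left hchain (le_of_lt (inv_pos.mpr hd))
    calc α * ((A j).card : ℝ) = (d:ℝ)⁻¹ * (α * d * ((A j).card : ℝ)) := by
          field_simp
      _ ≤ (d:ℝ)⁻¹ * (d * (((A j).card : ℝ) - ((A (j+1)).card : ℝ))) := this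
      _ = ((A j).card : ℝ) - ((A (j+1)).card : ℝ) := by field_simp
  -- hence geometric decay
  have hr0 : (0:ℝ) ≤ 1 - α := by linarith
  have hgeom : ∀ k : ℕ, ((A (k+1)).card : ℝ) ≤ (1 - α) ^ k * (U.card : ℝ) := by
    intro k
    induction k with
    | zero =>
      simpa using (by exact_mod_cast Finset.card_le_card (hAsub 1) : ((A 1).card:ℝ) ≤ U.card)
    | succ k ih =>
      have h1 := key (k+1) (by omega)
      have h2 : ((A (k+2)).card : ℝ) ≤ (1 - α) * ((A (k+1)).card : ℝ) := by linarith
      calc ((A (k+2)).card : ℝ) ≤ (1 - α) * ((A (k+1)).card : ℝ) := h2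
        _ ≤ (1 - α) * ((1 - α) ^ k * (U.card : ℝ)) :=
            mul_le_mul_of_nonneg_left ih hr0
        _ = (1 - α) ^ (k+1) * (U.card : ℝ) := by ring
  -- rewrite the sum
  have hsum : ∑ x ∈ U, (D x : ℕ) = ∑ k ∈ Finset.range n, (A (k+1)).card := by
    have h1 : ∀ x ∈ U, D x = ((Finset.range n).filter (fun k => k + 1 ≤ D x)).card := by
      intro x hx
      have h2 : (Finset.range n).filter (fun k => k + 1 ≤ D x) = Finset.range (D x) := by
        ext k
        simp only [Finset.mem_filter, Finset.mem_range]
        have := hDlt x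
        omega
      rw [h2, Finset.card_range]
    calc ∑ x ∈ U, D x = ∑ x ∈ U, ((Finset.range n).filter (fun k => k + 1 ≤ D x)).card :=
          Finset.sum_congr rfl h1
      _ = ∑ x ∈ U, ∑ k ∈ Finset.range n, if k + 1 ≤ D x then 1 else 0 := by
          apply Finset.sum_congr rfl; intro x _; rw [Finset.card_filter]
      _ = ∑ k ∈ Finset.range n, ∑ x ∈ U, if k + 1 ≤ D x then 1 else 0 :=
          Finset.sum_comm
      _ = ∑ k ∈ Finset.range n, (A (k+1)).card := by
          apply Finset.sum_congr rfl; intro k _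
          rw [hAdef]; rw [Finset.card_filter]
  have hgsum : ∑ k ∈ Finset.range n, (1 - α) ^ k ≤ 1 / α := by
    have hne : (1 - α) ≠ 1 := by linarith
    rw [geom_sum_eq hne]
    have hpow : (0:ℝ) ≤ (1 - α) ^ n := pow_nonneg hr0 n
    have hαne : α ≠ 0 := ne_of_gt hα0
    have h1 : ((1 - α)^n - 1)/(1 - α - 1) = (1 - (1-α)^n)/α := by
      rw [show (1 - α - 1 : ℝ) = -α by ring, div_neg, ← neg_div, neg_sub]
    rw [h1]
    gcongr
    linarith
  calc ∑ x ∈ U, ((D x : ℕ) : ℝ) = ((∑ x ∈ U, (D x : ℕ) : ℕ) : ℝ) := by push_cast; ring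
    _ = ((∑ k ∈ Finset.range n, (A (k+1)).card : ℕ) : ℝ) := by rw [hsum]
    _ = ∑ k ∈ Finset.range n, ((A (k+1)).card : ℝ) := by push_cast; ring
    _ ≤ ∑ k ∈ Finset.range n, (1 - α) ^ k * (U.card : ℝ) :=
        Finset.sum_le_sum (fun k _ => hgeom k)
    _ = (∑ k ∈ Finset.range n, (1 - α) ^ k) * (U.card : ℝ) := by
        rw [Finset.sum_mul]
    _ ≤ (1 / α) * (U.card : ℝ) := mul_le_mul_of_nonneg_right hgsum hUcard_nonneg
    _ ≤ (U.card : ℝ) / α ^ 2 := by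
        rw [div_eq_mul_inv, mul_comm]
        apply mul_le_mul_of_nonneg_left _ hUcard_nonneg
        rw [one_mul]
        exact inv_anti₀ hα2 (by nlinarith)
end

section
/- In the expander setting, the BFS 'levels' from the complement of U shrink geometrically: if L_j = {x ∈ U : d_G(x,M∖U) = j} and S_j = L_j ∪ L_{j+1} ∪ …, then |S_{j+1}| ≤ (1−α)|S_j| for all j ≥ 1, and hence |L_j| ≤ (1−α)^{j−1}|U|. -/
theorem stmt11 {V : Type*} [Fintype V] [DecidableEq V] (G : SimpleGraph V) [DecidableRel G.Adj]
    (n : ℕ) (hn : Fintype.card V = n)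
    (d : ℕ) (hreg : ∀ v : V, G.degree v = d)
    (α : ℝ) (hα0 : 0 < α) (hα1 : α < 1)
    (hexp : ∀ S : Finset V, (S.card : ℝ) ≤ n / 2 →
      α * d * S.card ≤
        ({p : V × V | p.1 ∈ S ∧ p.2 ∉ S ∧ G.Adj p.1 p.2}.ncard : ℝ))
    (U : Finset V) (hU : U.Nonempty) (hUhalf : (U.card : ℝ) ≤ n / 2)
    (hUc : Uᶜ.Nonempty)
    (L : ℕ → Finset V)
    (hL : ∀ j : ℕ, 1 ≤ j →
      L j = U.filter (fun x => Uᶜ.inf' hUc (fun t => G.dist x t) = j))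
    (Sj : ℕ → Finset V)
    (hSj : ∀ j : ℕ, 1 ≤ j →
      Sj j = U.filter (fun x => j ≤ Uᶜ.inf' hUc (fun t => G.dist x t))) :
    (∀ j : ℕ, 1 ≤ j → ((Sj (j + 1)).card : ℝ) ≤ (1 - α) * (Sj j).card) ∧
    (∀ j : ℕ, 1 ≤ j →
      ((L j).card : ℝ) ≤ (Sj j).card ∧
      ((Sj j).card : ℝ) ≤ (1 - α) ^ (j - 1) * U.card) := by
  classical
  -- monotonicity of Sj
  have hmono : ∀ j : ℕ, 1 ≤ j → Sj (j + 1) ⊆ Sj j := by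
    intro j hj
    rw [hSj j hj, hSj (j+1) (by omega)]
    intro x hx
    simp only [Finset.mem_filter] at hx ⊢
    exact ⟨hx.1, by omega⟩
  -- the key BFS lemma: neighbors of Sj (j+1) lie in Sj j
  have hkey : ∀ j : ℕ, 1 ≤ j → ∀ x y : V, x ∈ Sj (j+1) → G.Adj x y → y ∈ Sj j := by
    intro j hj x y hx hxy
    rw [hSj (j+1) (by omega)] at hx
    rw [hSj j hj]
    simp only [Finset.mem_filter] at hx
    obtain ⟨hxU, hxd⟩ := hx
    have hyU : y ∈ U := by
      by_contra hy
      have hy' : y ∈ Uᶜ := Finset.mem_compl.mpr hy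
      have h1 : Uᶜ.inf' hUc (fun t => G.dist x t) ≤ G.dist x y :=
        Finset.inf'_le _ hy'
      rw [(SimpleGraph.dist_eq_one_iff_adj).mpr hxy] at h1
      omega
    refine Finset.mem_filter.mpr ⟨hyU, Finset.le_inf' _ _ ?_⟩
    intro t ht
    have hxt : j + 1 ≤ G.dist x t := le_trans hxd (Finset.inf'_le _ ht)
    have hxt0 : G.dist x t ≠ 0 := by omega
    have hreach : G.Reachable x t := SimpleGraph.Reachable.of_dist_ne_zero hxt0
    have hryt : G.Reachable y t := (hxy.symm.reachable).trans hreach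
    obtain ⟨p, hp⟩ := hryt.exists_walk_length_eq_dist
    have h2 : G.dist x t ≤ (SimpleGraph.Walk.cons hxy p).length := SimpleGraph.dist_le _
    rw [SimpleGraph.Walk.length_cons, hp] at h2
    omega
  -- d = 0 forces Sj j empty
  have hdzero : d = 0 → ∀ j : ℕ, 1 ≤ j → Sj j = ∅ := by
    intro hd j hj
    rw [hSj j hj]
    rw [Finset.eq_empty_iff_forall_notMem]
    intro x hx
    simp only [Finset.mem_filter] at hx
    obtain ⟨t0, ht0⟩ := hUc
    have hxt : j ≤ G.dist x t0 := le_trans hx.2 (Finset.inf'_le _ ht0)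
    have hxt0 : G.dist x t0 ≠ 0 := by omega
    have hne : x ≠ t0 := (SimpleGraph.dist_ne_zero_iff_ne_and_reachable.mp hxt0).1
    obtain ⟨p⟩ := (SimpleGraph.dist_ne_zero_iff_ne_and_reachable.mp hxt0).2
    cases p with
    | nil => exact hne rfl
    | cons h q =>
      rename_i w0
      have hmem : w0 ∈ G.neighborFinset x := by
        rw [SimpleGraph.mem_neighborFinset]; exact h
      have hpos : 0 < G.degree x := Finset.card_pos.mpr ⟨w0, hmem⟩
      rw [hreg x, hd] at hpos
      omega
  -- main shrinking estimate
  have hstep : ∀ j : ℕ, 1 ≤ j → ((Sj (j + 1)).card : ℝ) ≤ (1 - α) * (Sj j).card := by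
    intro j hj
    rcases Nat.eq_zero_or_pos d with hd | hd
    · rw [hdzero hd (j+1) (by omega), hdzero hd j hj]
      simp
    · set A := Sj j with hA
      set B := Sj (j+1) with hB
      have hBA : B ⊆ A := hmono j hj
      have hAU : A ⊆ U := by rw [hA, hSj j hj]; exact Finset.filter_subset _ _
      have hAhalf : (A.card : ℝ) ≤ n / 2 :=
        le_trans (by exact_mod_cast Nat.cast_le.mpr (Finset.card_le_card hAU)) hUhalf
      have hE := hexp A hAhalf
      -- convert ncard to a finset card
      have hset : {p : V × V | p.1 ∈ A ∧ p.2 ∉ A ∧ G.Adj p.1 p.2}.ncard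
          = (Finset.univ.filter (fun p : V × V => p.1 ∈ A ∧ p.2 ∉ A ∧ G.Adj p.1 p.2)).card := by
        rw [Set.ncard_eq_toFinset_card']
        congr 1
        ext p
        simp
      -- crossing pairs have source in A \ B
      have hsub : Finset.univ.filter (fun p : V × V => p.1 ∈ A ∧ p.2 ∉ A ∧ G.Adj p.1 p.2)
          ⊆ Finset.univ.filter (fun p : V × V => p.1 ∈ A \ B ∧ G.Adj p.1 p.2) := by
        intro p hp
        simp only [Finset.mem_filter, Finset.mem_univ, true_and, Finset.mem_sdiff] at hp ⊢
        refine ⟨⟨hp.1, ?_⟩, hp.2.2⟩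
        intro hpB
        exact hp.2.1 (hkey j hj p.1 p.2 hpB hp.2.2)
      -- count pairs with fixed source set
      have hcount : (Finset.univ.filter (fun p : V × V => p.1 ∈ A \ B ∧ G.Adj p.1 p.2)).card
          ≤ d * (A \ B).card := by
        have heq : Finset.univ.filter (fun p : V × V => p.1 ∈ A \ B ∧ G.Adj p.1 p.2)
            = (A \ B).biUnion (fun v => (G.neighborFinset v).image (Prod.mk v)) := by
          ext p
          simp only [Finset.mem_filter, Finset.mem_univ, true_and, Finset.mem_biUnion,
            Finset.mem_image, SimpleGraph.mem_neighborFinset]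
          constructor
          · rintro ⟨h1, h2⟩
            exact ⟨p.1, h1, p.2, h2, rfl⟩
          · rintro ⟨v, hv, w, hw, rfl⟩
            exact ⟨hv, hw⟩
        rw [heq]
        calc ((A \ B).biUnion (fun v => (G.neighborFinset v).image (Prod.mk v))).card
            ≤ ∑ v ∈ A \ B, ((G.neighborFinset v).image (Prod.mk v)).card :=
              Finset.card_biUnion_le
          _ ≤ ∑ v ∈ A \ B, d := by
              apply Finset.sum_le_sum
              intro v _
              calc ((G.neighborFinset v).image (Prod.mk v)).card
                  ≤ (G.neighborFinset v).card := Finset.card_image_le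
                _ = d := hreg v
          _ = d * (A \ B).card := by rw [Finset.sum_const, smul_eq_mul, mul_comm]
      have hcardsd : ((A \ B).card : ℝ) = (A.card : ℝ) - B.card := by
        rw [Finset.card_sdiff_of_subset hBA]
        have := Finset.card_le_card hBA
        push_cast [Nat.cast_sub this]
        ring
      have hchain : α * d * A.card ≤ (d : ℝ) * ((A.card : ℝ) - B.card) := by
        calc α * d * A.card
            ≤ (({p : V × V | p.1 ∈ A ∧ p.2 ∉ A ∧ G.Adj p.1 p.2}.ncard : ℕ) : ℝ) := hE
          _ ≤ ((d * (A \ B).card : ℕ) : ℝ) := by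
              exact_mod_cast le_trans (hset ▸ Finset.card_le_card hsub) hcount
          _ = (d : ℝ) * ((A.card : ℝ) - B.card) := by push_cast; rw [hcardsd]
      have hdpos : (0 : ℝ) < d := by exact_mod_cast hd
      nlinarith [hchain, hdpos]
  refine ⟨hstep, ?_⟩
  -- geometric decay
  have hpow : ∀ j : ℕ, 1 ≤ j → ((Sj j).card : ℝ) ≤ (1 - α) ^ (j - 1) * U.card := by
    intro j hj
    induction j with
    | zero => omega
    | succ k ih =>
      rcases Nat.lt_or_ge 1 (k + 1) with h2 | h2
      · have hk : 1 ≤ k := by omega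
        obtain ⟨m, rfl⟩ : ∃ m, k = m + 1 := ⟨k - 1, by omega⟩
        calc ((Sj (m + 1 + 1)).card : ℝ) ≤ (1 - α) * (Sj (m + 1)).card := hstep (m+1) (by omega)
          _ ≤ (1 - α) * ((1 - α) ^ (m + 1 - 1) * U.card) := by
              apply mul_le_mul_of_nonneg_left (ih (by omega)) (by linarith)
          _ = (1 - α) ^ (m + 1 + 1 - 1) * U.card := by
              show (1 - α) * ((1 - α) ^ m * (U.card : ℝ)) = (1 - α) ^ (m + 1) * U.card
              ring
      · have hk1 : k = 0 := by omega
        subst hk1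
        show ((Sj 1).card : ℝ) ≤ (1 - α) ^ 0 * U.card
        rw [pow_zero, one_mul]
        have : Sj 1 ⊆ U := by rw [hSj 1 le_rfl]; exact Finset.filter_subset _ _
        exact_mod_cast Finset.card_le_card this
  intro j hj
  refine ⟨?_, hpow j hj⟩
  have hLS : L j ⊆ Sj j := by
    rw [hL j hj, hSj j hj]
    intro x hx
    simp only [Finset.mem_filter] at hx ⊢
    exact ⟨hx.1, by omega⟩
  exact_mod_cast Finset.card_le_card hLS
end

section
/- Combining the subsample quality bounds: for any finite metric space (M,d) with |M|=n and any S ⊆ M with |S| = s ≥ 1, if an algorithm returns an O(log s)-approximate 1-median of (S,d|_{S×S}), then this point is an O((n log s)/s)-approximate 1-median of (M,d). Concretely, with approximation factor β on S, the output has approximation factor at most 1 + 4βn/s on M. -/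
theorem stmt17 {M : Type*} [MetricSpace M] [Fintype M]
    (n : ℕ) (hn : Fintype.card M = n)
    (S : Finset M) (s : ℕ) (hs : S.card = s) (hs1 : 1 ≤ s)
    (β : ℝ) (hβ : 1 ≤ β)
    (x'S : M) (hx' : x'S ∈ S)
    (happrox : ∀ q ∈ S, ∑ y ∈ S, dist x'S y ≤ β * ∑ y ∈ S, dist q y) :
    ∀ q : M, ∑ y : M, dist x'S y ≤
      (1 + 4 * β * (n : ℝ) / s) * ∑ y : M, dist q y := by
  intro q
  obtain ⟨y₀, hy₀S, hy₀min⟩ := S.exists_min_image (fun y => dist q y) ⟨x'S, hx'⟩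
  have hspos : (0:ℝ) < s := by exact_mod_cast hs1
  have hn0 : (0:ℝ) ≤ n := Nat.cast_nonneg n
  set cSq := ∑ y ∈ S, dist q y with hcSq
  have hcSq0 : 0 ≤ cSq := Finset.sum_nonneg fun _ _ => dist_nonneg
  have h1 : (s:ℝ) * dist q y₀ ≤ cSq := by
    calc (s:ℝ) * dist q y₀ = ∑ _y ∈ S, dist q y₀ := by
          rw [Finset.sum_const, hs, nsmul_eq_mul]
      _ ≤ cSq := Finset.sum_le_sum fun y hy => hy₀min y hy
  have h2 : ∑ y ∈ S, dist y₀ y ≤ 2 * cSq := by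
    calc ∑ y ∈ S, dist y₀ y ≤ ∑ y ∈ S, (dist y₀ q + dist q y) :=
          Finset.sum_le_sum fun y _ => dist_triangle _ _ _
      _ = (s:ℝ) * dist y₀ q + cSq := by
          rw [Finset.sum_add_distrib, Finset.sum_const, hs, nsmul_eq_mul]
      _ ≤ 2 * cSq := by rw [dist_comm y₀ q]; linarith
  have h3 : ∑ y ∈ S, dist x'S y ≤ 2 * β * cSq := by
    calc ∑ y ∈ S, dist x'S y ≤ β * ∑ y ∈ S, dist y₀ y := happrox y₀ hy₀S
      _ ≤ 2 * β * cSq := by nlinarith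
  have h4 : (s:ℝ) * dist x'S q ≤ 3 * β * cSq := by
    have ht : ∑ _y ∈ S, dist x'S q ≤ ∑ y ∈ S, (dist x'S y + dist y q) :=
      Finset.sum_le_sum fun y _ => dist_triangle _ _ _
    have hrw : ∑ y ∈ S, (dist x'S y + dist y q)
        = (∑ y ∈ S, dist x'S y) + cSq := by
      rw [Finset.sum_add_distrib, hcSq]
      congr 1
      exact Finset.sum_congr rfl fun y _ => dist_comm y q
    have hl : (∑ _y ∈ S, dist x'S q) = (s:ℝ) * dist x'S q := by
      rw [Finset.sum_const, hs, nsmul_eq_mul]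
    nlinarith [ht]
  have hcM : cSq ≤ ∑ y : M, dist q y := by
    apply Finset.sum_le_sum_of_subset_of_nonneg (Finset.subset_univ S)
    intros; exact dist_nonneg
  have hcM0 : (0:ℝ) ≤ ∑ y : M, dist q y := hcSq0.trans hcM
  have htri : ∑ y : M, dist x'S y ≤ (n:ℝ) * dist x'S q + ∑ y : M, dist q y := by
    calc ∑ y : M, dist x'S y ≤ ∑ y : M, (dist x'S q + dist q y) :=
          Finset.sum_le_sum fun y _ => dist_triangle _ _ _
      _ = (n:ℝ) * dist x'S q + ∑ y : M, dist q y := by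
          rw [Finset.sum_add_distrib, Finset.sum_const, Finset.card_univ, hn, nsmul_eq_mul]
  have hdiv : (n:ℝ) * dist x'S q ≤ 4 * β * (n:ℝ) / s * ∑ y : M, dist q y := by
    rw [div_mul_eq_mul_div, le_div_iff₀ hspos]
    have ha : (n:ℝ) * ((s:ℝ) * dist x'S q) ≤ (n:ℝ) * (3 * β * cSq) :=
      mul_le_mul_of_nonneg_left h4 hn0
    have hb : 3 * β * (n:ℝ) * cSq ≤ 3 * β * (n:ℝ) * ∑ y : M, dist q y :=
      mul_le_mul_of_nonneg_left hcM (by positivity)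
    have hc : (0:ℝ) ≤ β * (n:ℝ) * ∑ y : M, dist q y := by positivity
    nlinarith [ha, hb, hc]
  linarith
end
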